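/- arXiv:2603.20819 — 2 statements merged into one kernel-verified Lean document; each statement's English description precedes it below -/
import Mathlib

section
/- Let V ∈ ℝ^{n×m} and let u be a random vector in ℝ^m with E[u u^T] = σ_u² I_m and ‖u‖_∞ ≤ u_max almost surely. Then for any θ ∈ (0,1), P(‖Vu‖₂² ≥ θ σ_u² ‖V‖_F²) ≥ (1-θ)² σ_u⁴ / (m² u_max⁴), provided V ≠ 0. -/
open MeasureTheory

/-- Excitation lower bound for the input contribution: if `E[u uᵀ] = σ_u² I` and
`‖u‖_∞ ≤ u_max` a.s., then for `θ ∈ (0,1)` and `V ≠ 0`,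
`P(‖Vu‖₂² ≥ θ σ_u² ‖V‖_F²) ≥ (1-θ)² σ_u⁴ / (m² u_max⁴)`. -/
theorem stmt_4
    {Ω : Type*} [MeasurableSpace Ω] (P : Measure Ω) [IsProbabilityMeasure P]
    (n m : ℕ) (V : Matrix (Fin n) (Fin m) ℝ) (hV : V ≠ 0)
    (u : Ω → Fin m → ℝ) (hu_meas : ∀ i, Measurable fun ω => u ω i)
    (σu umax : ℝ) (hσu : 0 < σu) (humax : 0 < umax)
    (hbound : ∀ᵐ ω ∂P, ∀ i, |u ω i| ≤ umax)
    (hInt : ∀ i j, Integrable (fun ω => u ω i * u ω j) P)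
    (hcov : ∀ i j, ∫ ω, u ω i * u ω j ∂P = if i = j then σu ^ 2 else 0)
    (θ : ℝ) (hθ0 : 0 < θ) (hθ1 : θ < 1) :
    ENNReal.ofReal ((1 - θ) ^ 2 * σu ^ 4 / ((m : ℝ) ^ 2 * umax ^ 4))
      ≤ P {ω | θ * σu ^ 2 * (∑ i, ∑ j, (V i j) ^ 2) ≤ ∑ i, (V.mulVec (u ω) i) ^ 2} := by
  classical
  set S : ℝ := ∑ i, ∑ j, (V i j) ^ 2 with hSdef
  obtain ⟨i0, j0, hVij⟩ : ∃ i j, V i j ≠ 0 := by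
    by_contra h
    push_neg at h
    exact hV (by ext i j; simpa using h i j)
  have hS_pos : 0 < S := by
    have h1 : (V i0 j0) ^ 2 ≤ ∑ j, (V i0 j) ^ 2 :=
      Finset.single_le_sum (f := fun j => (V i0 j) ^ 2) (fun j _ => sq_nonneg _)
        (Finset.mem_univ _)
    have h2 : ∑ j, (V i0 j) ^ 2 ≤ S :=
      Finset.single_le_sum (f := fun i => ∑ j, (V i j) ^ 2)
        (fun i _ => Finset.sum_nonneg fun j _ => sq_nonneg _) (Finset.mem_univ i0)
    have h0 : 0 < (V i0 j0) ^ 2 := by positivity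
    linarith
  have hm : 1 ≤ (m : ℝ) := Nat.one_le_cast.mpr j0.pos
  set X : Ω → ℝ := fun ω => ∑ i, (V.mulVec (u ω) i) ^ 2 with hXdef
  have hX_expand : ∀ ω, X ω = ∑ i, ∑ j, ∑ k, (V i j * V i k) * (u ω j * u ω k) := by
    intro ω
    refine Finset.sum_congr rfl fun i _ => ?_
    have : V.mulVec (u ω) i = ∑ j, V i j * u ω j := by
      simp [Matrix.mulVec, dotProduct]
    rw [this, sq, Finset.sum_mul_sum]
    exact Finset.sum_congr rfl fun j _ => Finset.sum_congr rfl fun k _ => by ring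
  have hX_int : Integrable X P := by
    have h : Integrable (fun ω => ∑ i : Fin n, ∑ j, ∑ k, (V i j * V i k) * (u ω j * u ω k)) P :=
      integrable_finset_sum _ fun i _ => integrable_finset_sum _ fun j _ =>
        integrable_finset_sum _ fun k _ => (hInt j k).const_mul _
    exact h.congr (ae_of_all _ fun ω => (hX_expand ω).symm)
  have hEX : ∫ ω, X ω ∂P = σu ^ 2 * S := by
    have h1 : ∫ ω, X ω ∂P
        = ∫ ω, ∑ i : Fin n, ∑ j, ∑ k, (V i j * V i k) * (u ω j * u ω k) ∂P :=
      integral_congr_ae (ae_of_all _ hX_expand)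
    rw [h1, integral_finset_sum _ (fun i _ => integrable_finset_sum _ fun j _ =>
      integrable_finset_sum _ fun k _ => (hInt j k).const_mul _)]
    have h2 : ∀ i : Fin n, ∫ ω, ∑ j, ∑ k, (V i j * V i k) * (u ω j * u ω k) ∂P
        = σu ^ 2 * ∑ j, (V i j) ^ 2 := by
      intro i
      rw [integral_finset_sum _ (fun j _ => integrable_finset_sum _ fun k _ =>
        (hInt j k).const_mul _)]
      rw [Finset.mul_sum]
      refine Finset.sum_congr rfl fun j _ => ?_
      rw [integral_finset_sum _ (fun k _ => (hInt j k).const_mul _)]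
      have h3 : ∀ k : Fin m, ∫ ω, (V i j * V i k) * (u ω j * u ω k) ∂P
          = if j = k then V i j * V i j * σu ^ 2 else 0 := by
        intro k
        rw [integral_const_mul, hcov j k]
        by_cases hjk : j = k <;> simp [hjk, mul_comm, mul_assoc, mul_left_comm]
      simp_rw [h3]
      rw [Finset.sum_ite_eq]
      simp [sq]
      ring
    simp_rw [h2]
    rw [← Finset.mul_sum]
  set B : ℝ := (m : ℝ) * umax ^ 2 * S with hBdef
  have hXB : ∀ᵐ ω ∂P, X ω ≤ B := by
    filter_upwards [hbound] with ω hω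
    have hu2 : ∑ j, (u ω j) ^ 2 ≤ (m : ℝ) * umax ^ 2 := by
      calc ∑ j, (u ω j) ^ 2 ≤ ∑ _j : Fin m, umax ^ 2 :=
            Finset.sum_le_sum fun j _ =>
              sq_le_sq' (neg_le_of_abs_le (hω j)) (le_of_abs_le (hω j))
        _ = (m : ℝ) * umax ^ 2 := by simp [Finset.sum_const, Finset.card_univ, nsmul_eq_mul]
    calc X ω ≤ ∑ i, (∑ j, (V i j) ^ 2) * ((m : ℝ) * umax ^ 2) := by
          refine Finset.sum_le_sum fun i _ => ?_
          have hmv : V.mulVec (u ω) i = ∑ j, V i j * u ω j := by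
            simp [Matrix.mulVec, dotProduct]
          calc (V.mulVec (u ω) i) ^ 2 = (∑ j, V i j * u ω j) ^ 2 := by rw [hmv]
            _ ≤ (∑ j, (V i j) ^ 2) * ∑ j, (u ω j) ^ 2 :=
                Finset.sum_mul_sq_le_sq_mul_sq Finset.univ _ _
            _ ≤ (∑ j, (V i j) ^ 2) * ((m : ℝ) * umax ^ 2) :=
                mul_le_mul_of_nonneg_left hu2 (Finset.sum_nonneg fun j _ => sq_nonneg _)
      _ = B := by rw [← Finset.sum_mul, hBdef]; ring
  have hX_meas : Measurable X := by
    refine Finset.measurable_sum _ fun i _ => ?_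
    have : (fun ω => V.mulVec (u ω) i) = fun ω => ∑ j, V i j * u ω j := by
      funext ω; simp [Matrix.mulVec, dotProduct]
    exact ((this ▸ (Finset.measurable_sum _ fun j _ =>
      (hu_meas j).const_mul _)) : Measurable fun ω => V.mulVec (u ω) i).pow_const 2
  set A : Set Ω := {ω | θ * σu ^ 2 * S ≤ X ω} with hAdef
  have hA : MeasurableSet A := measurableSet_le measurable_const hX_meas
  set pA : ℝ := (P A).toReal with hpAdef
  have hpA_nonneg : 0 ≤ pA := ENNReal.toReal_nonneg
  have key : (1 - θ) * (σu ^ 2 * S) ≤ B * pA := by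
    have hsplit : ∫ ω, X ω ∂P = (∫ ω in A, X ω ∂P) + ∫ ω in Aᶜ, X ω ∂P :=
      (integral_add_compl hA hX_int).symm
    have h1 : ∫ ω in A, X ω ∂P ≤ B * pA := by
      calc ∫ ω in A, X ω ∂P ≤ ∫ _ω in A, B ∂P :=
            setIntegral_mono_ae hX_int.integrableOn (integrable_const B).integrableOn hXB
        _ = pA * B := by rw [setIntegral_const]; rfl
        _ = B * pA := by ring
    have h2 : ∫ ω in Aᶜ, X ω ∂P ≤ θ * σu ^ 2 * S := by
      have hc : ∫ ω in Aᶜ, X ω ∂P ≤ ∫ _ω in Aᶜ, θ * σu ^ 2 * S ∂P := by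
        refine setIntegral_mono_on hX_int.integrableOn (integrable_const _).integrableOn
          hA.compl fun ω hω => ?_
        exact le_of_lt (lt_of_not_ge hω)
      have hcc : ∫ _ω in Aᶜ, θ * σu ^ 2 * S ∂P = (P Aᶜ).toReal * (θ * σu ^ 2 * S) := by
        rw [setIntegral_const]; rfl
      have hle1 : (P Aᶜ).toReal ≤ 1 := by
        simpa using ENNReal.toReal_mono (by simp) (prob_le_one (μ := P) (s := Aᶜ))
      have hnn : 0 ≤ θ * σu ^ 2 * S := by positivity
      calc ∫ ω in Aᶜ, X ω ∂P ≤ (P Aᶜ).toReal * (θ * σu ^ 2 * S) := hc.trans_eq hcc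
        _ ≤ 1 * (θ * σu ^ 2 * S) := mul_le_mul_of_nonneg_right hle1 hnn
        _ = θ * σu ^ 2 * S := one_mul _
    have hEXeq : σu ^ 2 * S = (∫ ω in A, X ω ∂P) + ∫ ω in Aᶜ, X ω ∂P := by
      rw [← hsplit, hEX]
    linarith [h1, h2, hEXeq]
  have hσu_le : σu ^ 2 ≤ umax ^ 2 := by
    have h := hcov j0 j0
    simp only [if_pos rfl] at h
    have hmono : ∫ ω, u ω j0 * u ω j0 ∂P ≤ ∫ _ω, umax ^ 2 ∂P := by
      refine integral_mono_ae (hInt j0 j0) (integrable_const _) ?_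
      filter_upwards [hbound] with ω hω
      have h1 := (abs_le.mp (hω j0)).1
      have h2 := (abs_le.mp (hω j0)).2
      nlinarith
    rw [h] at hmono
    simpa using hmono
  have hkey2 : (1 - θ) * σu ^ 2 ≤ (m : ℝ) * umax ^ 2 * pA := by
    nlinarith [key, hS_pos]
  have hr_le : (1 - θ) * σu ^ 2 / ((m : ℝ) * umax ^ 2) ≤ pA := by
    rw [div_le_iff₀ (by positivity)]
    nlinarith [hkey2]
  set r : ℝ := (1 - θ) * σu ^ 2 / ((m : ℝ) * umax ^ 2) with hrdef
  have hr0 : 0 ≤ r := by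
    have h1θ : (0:ℝ) ≤ 1 - θ := by linarith
    rw [hrdef]; positivity
  have hr1 : r ≤ 1 := by
    rw [hrdef, div_le_one (by positivity)]
    nlinarith [hσu_le, hm, sq_nonneg σu, sq_nonneg umax]
  have hgoal_eq : (1 - θ) ^ 2 * σu ^ 4 / ((m : ℝ) ^ 2 * umax ^ 4) = r ^ 2 := by
    rw [hrdef, div_pow]
    congr 1 <;> ring
  have hfinal : (1 - θ) ^ 2 * σu ^ 4 / ((m : ℝ) ^ 2 * umax ^ 4) ≤ pA := by
    rw [hgoal_eq]
    calc r ^ 2 ≤ r := by nlinarith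
      _ ≤ pA := hr_le
  calc ENNReal.ofReal ((1 - θ) ^ 2 * σu ^ 4 / ((m : ℝ) ^ 2 * umax ^ 4))
      ≤ ENNReal.ofReal pA := ENNReal.ofReal_le_ofReal hfinal
    _ = P A := ENNReal.ofReal_toReal (measure_ne_top P A)
end

section
/- Let (Z_t)_{t≥1} be a real-valued process adapted to a filtration (F_t) satisfying the (1,k,p)-block martingale small-ball condition: for every t, P(|Z_{t+1}| ≥ k | F_t) ≥ p. Then for every integer T ≥ 1, P(Σ_{t=1}^T Z_t² ≤ k²p²T/8) ≤ exp(-Tp²/8). -/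
open MeasureTheory ProbabilityTheory Real

/-!
Let `B_t` be the indicator of `{k ≤ |Z_t|}` and `S_n = ∑_{t=1}^n B_t`, so that
`∑ Z_t² ≥ k² S_T`. On `[0, 1]` convexity gives `exp (-x) ≤ 1 - (1 - e⁻¹) x`; pulling the
`F_n`-measurable factor `exp (-S_n)` out of the conditional expectation of `B_{n+1}` and using
the small-ball condition yields `E exp (-S_{n+1}) ≤ (1 - (1 - e⁻¹) p) E exp (-S_n)`, hence
`E exp (-S_T) ≤ exp (-(1 - e⁻¹) p T)`. The Chernoff bound at parameter `-1` then gives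
`P (S_T ≤ p² T / 8) ≤ exp (p² T / 8 - (1 - e⁻¹) p T) ≤ exp (-p² T / 8)`, because
`1 - e⁻¹ ≥ 1 / 2 ≥ p / 4`.
-/

lemma exp_neg_le_one_sub_mul {x : ℝ} (h0 : 0 ≤ x) (h1 : x ≤ 1) :
    exp (-x) ≤ 1 - (1 - exp (-1)) * x := by
  have h := convexOn_exp.2 (Set.mem_univ 0) (Set.mem_univ (-1)) (sub_nonneg.2 h1) h0 (by ring)
  simp only [smul_eq_mul, mul_zero, mul_neg_one, zero_add, exp_zero, mul_one] at h
  linarith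

lemma half_le_one_sub_exp_neg_one : 1 / 2 ≤ 1 - exp (-1) := by
  have h : 2 ≤ exp 1 := by linarith [add_one_le_exp 1]
  rw [exp_neg]
  linarith [inv_anti₀ zero_lt_two h]

lemma mul_integral_le_integral_mul_of_le_condExp {Ω : Type*} {m mΩ : MeasurableSpace Ω}
    {μ : Measure Ω} [IsFiniteMeasure μ] (hm : m ≤ mΩ) {f g : Ω → ℝ} {p C : ℝ}
    (hf : StronglyMeasurable[m] f) (hf0 : 0 ≤ f) (hf_bdd : ∀ᵐ ω ∂μ, ‖f ω‖ ≤ C)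
    (hg : Integrable g μ) (hgp : ∀ᵐ ω ∂μ, p ≤ μ[g | m] ω) :
    p * ∫ ω, f ω ∂μ ≤ ∫ ω, f ω * g ω ∂μ := by
  have hf_sm : AEStronglyMeasurable f μ := (hf.mono hm).aestronglyMeasurable
  have hfg : Integrable (f * g) μ := hg.bdd_mul hf_sm hf_bdd
  calc p * ∫ ω, f ω ∂μ = ∫ ω, f ω * p ∂μ := by rw [← integral_const_mul]; simp_rw [mul_comm]
    _ ≤ ∫ ω, f ω * μ[g | m] ω ∂μ := by
      refine integral_mono_ae ((integrable_const p).bdd_mul hf_sm hf_bdd)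
        (integrable_condExp.bdd_mul hf_sm hf_bdd) ?_
      filter_upwards [hgp] with ω hω
      exact mul_le_mul_of_nonneg_left hω (hf0 ω)
    _ = ∫ ω, μ[f * g | m] ω ∂μ :=
      integral_congr_ae (condExp_mul_of_stronglyMeasurable_left hf hfg hg).symm
    _ = ∫ ω, f ω * g ω ∂μ := integral_condExp hm

lemma sq_mul_indicator_le_sq {k : ℝ} (hk : 0 ≤ k) (x : ℝ) :
    k ^ 2 * {y : ℝ | k ≤ |y|}.indicator 1 x ≤ x ^ 2 := by
  by_cases h : k ≤ |x|
  · simpa [h, sq_abs] using pow_le_pow_left₀ hk h 2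
  · simp [h, sq_nonneg]

section Chernoff

variable {Ω : Type*} {mΩ : MeasurableSpace Ω} {μ : Measure Ω} [IsProbabilityMeasure μ]
  {F : Filtration ℕ mΩ} {B : ℕ → Ω → ℝ} {p : ℝ}

lemma integral_exp_neg_sum_le (hB : Adapted F B) (hB0 : ∀ t ω, 0 ≤ B t ω)
    (hB1 : ∀ t ω, B t ω ≤ 1) (hp : ∀ t, ∀ᵐ ω ∂μ, p ≤ μ[B (t + 1) | F t] ω) (n : ℕ) :
    ∫ ω, exp (-∑ t ∈ Finset.Icc 1 n, B t ω) ∂μ ≤ exp (-((1 - exp (-1)) * p * n)) := by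
  set c := 1 - exp (-1)
  have hc : 0 ≤ c := by linarith [half_le_one_sub_exp_neg_one]
  have hB_bdd : ∀ t, ∀ᵐ ω ∂μ, ‖B t ω‖ ≤ 1 := fun t => ae_of_all _ fun ω => by
    rw [norm_of_nonneg (hB0 t ω)]; exact hB1 t ω
  have hB_int : ∀ t, Integrable (B t) μ := fun t =>
    .of_bound ((hB t).mono (F.le t) le_rfl).aestronglyMeasurable 1 (hB_bdd t)
  induction n with
  | zero => simp
  | succ n ih =>
    set f : Ω → ℝ := fun ω => exp (-∑ t ∈ Finset.Icc 1 n, B t ω)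
    have hf_meas : Measurable[F n] f := by
      refine (Finset.measurable_sum _ fun t ht => ?_).neg.exp
      exact (hB t).mono (F.mono (Finset.mem_Icc.1 ht).2) le_rfl
    have hf_sm : AEStronglyMeasurable f μ := (hf_meas.mono (F.le n) le_rfl).aestronglyMeasurable
    have hf0 : 0 ≤ f := fun ω => (exp_pos _).le
    have hf_bdd : ∀ᵐ ω ∂μ, ‖f ω‖ ≤ 1 := ae_of_all _ fun ω => by
      rw [norm_of_nonneg (hf0 ω), exp_le_one_iff, neg_nonpos]
      exact Finset.sum_nonneg fun t _ => hB0 t ω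
    have hf_int : Integrable f μ := .of_bound hf_sm 1 hf_bdd
    have hfB_int : Integrable (fun ω => f ω * B (n + 1) ω) μ :=
      (hB_int (n + 1)).bdd_mul hf_sm hf_bdd
    have hfB : p * ∫ ω, f ω ∂μ ≤ ∫ ω, f ω * B (n + 1) ω ∂μ :=
      mul_integral_le_integral_mul_of_le_condExp (F.le n) hf_meas.stronglyMeasurable hf0 hf_bdd
        (hB_int (n + 1)) (hp n)
    calc ∫ ω, exp (-∑ t ∈ Finset.Icc 1 (n + 1), B t ω) ∂μ
        ≤ ∫ ω, f ω * (1 - c * B (n + 1) ω) ∂μ := by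
          refine integral_mono_of_nonneg (ae_of_all _ fun ω => (exp_pos _).le)
            (((integrable_const 1).sub ((hB_int (n + 1)).const_mul c)).bdd_mul hf_sm hf_bdd)
            (ae_of_all _ fun ω => ?_)
          simp only [Finset.sum_Icc_succ_top (Nat.le_add_left 1 n), neg_add, exp_add]
          exact mul_le_mul_of_nonneg_left (exp_neg_le_one_sub_mul (hB0 _ ω) (hB1 _ ω)) (hf0 ω)
      _ = ∫ ω, f ω ∂μ - c * ∫ ω, f ω * B (n + 1) ω ∂μ := by
          rw [← integral_const_mul, ← integral_sub hf_int (hfB_int.const_mul c)]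
          simp_rw [mul_sub, mul_one, mul_left_comm]
      _ ≤ (1 - c * p) * ∫ ω, f ω ∂μ := by nlinarith
      _ ≤ exp (-(c * p)) * exp (-(c * p * n)) := by
          gcongr
          linarith [add_one_le_exp (-(c * p))]
      _ = exp (-(c * p * ↑(n + 1))) := by rw [← exp_add]; push_cast; ring_nf

lemma measureReal_sum_le_le_exp (hB : Adapted F B) (hB0 : ∀ t ω, 0 ≤ B t ω)
    (hB1 : ∀ t ω, B t ω ≤ 1) (hp : ∀ t, ∀ᵐ ω ∂μ, p ≤ μ[B (t + 1) | F t] ω) (a : ℝ) (n : ℕ) :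
    μ.real {ω | ∑ t ∈ Finset.Icc 1 n, B t ω ≤ a} ≤ exp (a - (1 - exp (-1)) * p * n) := by
  have hS : Measurable fun ω => ∑ t ∈ Finset.Icc 1 n, B t ω :=
    Finset.measurable_sum _ fun t _ => (hB t).mono (F.le t) le_rfl
  have h_int : Integrable (fun ω => exp (-1 * ∑ t ∈ Finset.Icc 1 n, B t ω)) μ := by
    refine .of_bound (hS.const_mul _).exp.aestronglyMeasurable 1 (ae_of_all _ fun ω => ?_)
    rw [norm_of_nonneg (exp_pos _).le, exp_le_one_iff, neg_one_mul, neg_nonpos]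
    exact Finset.sum_nonneg fun t _ => hB0 t ω
  calc μ.real {ω | ∑ t ∈ Finset.Icc 1 n, B t ω ≤ a}
      ≤ exp (-(-1) * a) * mgf (fun ω => ∑ t ∈ Finset.Icc 1 n, B t ω) μ (-1) :=
        measure_le_le_exp_mul_mgf a (by norm_num) h_int
    _ ≤ exp a * exp (-((1 - exp (-1)) * p * n)) := by
        simp only [mgf, neg_neg, one_mul, neg_one_mul]
        gcongr
        exact integral_exp_neg_sum_le hB hB0 hB1 hp n
    _ = exp (a - (1 - exp (-1)) * p * n) := by rw [← exp_add]; ring_nf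

end Chernoff

theorem stmt_18_general
    {Ω : Type*} {mΩ : MeasurableSpace Ω} (P : Measure Ω) [IsProbabilityMeasure P]
    (F : Filtration ℕ mΩ) (Z : ℕ → Ω → ℝ)
    (hadapted : ∀ t, Measurable[F t] (Z t))
    (k p : ℝ) (hk : 0 < k) (hp0 : 0 < p) (hp1 : p ≤ 1)
    (hBMSB : ∀ t : ℕ, ∀ᵐ ω ∂P,
      p ≤ (P[Set.indicator {ω' | k ≤ |Z (t + 1) ω'|} (fun _ => (1 : ℝ)) | F t]) ω)
    (T : ℕ) :
    P {ω | ∑ t ∈ Finset.Icc 1 T, (Z t ω) ^ 2 ≤ k ^ 2 * p ^ 2 * T / 8}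
      ≤ ENNReal.ofReal (Real.exp (-(T : ℝ) * p ^ 2 / 8)) := by
  set B : ℕ → Ω → ℝ := fun t => {ω | k ≤ |Z t ω|}.indicator fun _ => 1
  have hB : Adapted F B := fun t =>
    measurable_const.indicator ((measurable_abs.comp (hadapted t)) measurableSet_Ici)
  have hB0 : ∀ t ω, 0 ≤ B t ω := fun t ω => Set.indicator_nonneg (fun _ _ => zero_le_one) ω
  have hB1 : ∀ t ω, B t ω ≤ 1 := fun t ω =>
    Set.indicator_apply_le' (fun _ => le_rfl) fun _ => zero_le_one
  have hZB : ∀ t ω, k ^ 2 * B t ω ≤ Z t ω ^ 2 := fun t ω =>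
    sq_mul_indicator_le_sq hk.le (Z t ω)
  have hsub : {ω | ∑ t ∈ Finset.Icc 1 T, Z t ω ^ 2 ≤ k ^ 2 * p ^ 2 * T / 8}
      ⊆ {ω | ∑ t ∈ Finset.Icc 1 T, B t ω ≤ p ^ 2 * T / 8} := fun ω hω => by
    have hsum := Finset.sum_le_sum fun t (_ : t ∈ Finset.Icc 1 T) => hZB t ω
    rw [← Finset.mul_sum] at hsum
    simp only [Set.mem_ofPred_eq] at hω ⊢
    nlinarith [pow_pos hk 2]
  calc P {ω | ∑ t ∈ Finset.Icc 1 T, Z t ω ^ 2 ≤ k ^ 2 * p ^ 2 * T / 8}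
      ≤ P {ω | ∑ t ∈ Finset.Icc 1 T, B t ω ≤ p ^ 2 * T / 8} := measure_mono hsub
    _ = ENNReal.ofReal (P.real {ω | ∑ t ∈ Finset.Icc 1 T, B t ω ≤ p ^ 2 * T / 8}) :=
        (ofReal_measureReal).symm
    _ ≤ ENNReal.ofReal (exp (p ^ 2 * T / 8 - (1 - exp (-1)) * p * T)) :=
        ENNReal.ofReal_le_ofReal (measureReal_sum_le_le_exp hB hB0 hB1 hBMSB _ T)
    _ ≤ ENNReal.ofReal (exp (-(T : ℝ) * p ^ 2 / 8)) := by
        gcongr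
        have hc : p / 4 ≤ 1 - exp (-1) := by linarith [half_le_one_sub_exp_neg_one]
        have hTp : 0 ≤ (T : ℝ) * p := by positivity
        nlinarith [mul_nonneg hTp (sub_nonneg.2 hc)]

/-- Small-ball lower-tail bound (Simchowitz et al., Prop. 2.5): if the adapted real
process `(Z_t)` satisfies the `(1,k,p)` block martingale small-ball condition
`P(|Z_{t+1}| ≥ k | F_t) ≥ p` a.s. for all `t`, then for every `T ≥ 1`,
`P(Σ_{t=1}^T Z_t² ≤ k²p²T/8) ≤ exp(-Tp²/8)`. -/
theorem stmt_18
    {Ω : Type*} {mΩ : MeasurableSpace Ω} (P : Measure Ω) [IsProbabilityMeasure P]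
    (F : Filtration ℕ mΩ) (Z : ℕ → Ω → ℝ)
    (hadapted : ∀ t, Measurable[F t] (Z t))
    (k p : ℝ) (hk : 0 < k) (hp0 : 0 < p) (hp1 : p ≤ 1)
    (hBMSB : ∀ t : ℕ, ∀ᵐ ω ∂P,
      p ≤ (P[Set.indicator {ω' | k ≤ |Z (t + 1) ω'|} (fun _ => (1 : ℝ)) | F t]) ω)
    (T : ℕ) (hT : 1 ≤ T) :
    P {ω | ∑ t ∈ Finset.Icc 1 T, (Z t ω) ^ 2 ≤ k ^ 2 * p ^ 2 * T / 8}
      ≤ ENNReal.ofReal (Real.exp (-(T : ℝ) * p ^ 2 / 8)) :=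
  stmt_18_general P F Z hadapted k p hk hp0 hp1 hBMSB T
end
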